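/- Let n ≥ 1, let p be a real number with 1 < p, and let Φ : Matrix (Fin n) ℂ →ₗ[ℂ] Matrix (Fin n) ℂ be a positive trace-preserving linear map. Then Φ is unital (Φ 1 = 1) if and only if for every density matrix ρ one has (∑_k λ_k(Φρ)^p)^{1/p} ≤ (∑_k λ_k(ρ)^p)^{1/p}, where λ_k(·) denotes the eigenvalues of the density matrix; equivalently, Φ does not decrease the entropy N_p(ρ) = 1 − (∑_k λ_k(ρ)^p)^{1/p} (i.e., Φ does not increase the Schatten p-norm on density matrices). -/

import Mathlib

open scoped Matrix ComplexOrder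

/-- A density matrix: positive semidefinite with unit trace. -/
def IsDensityMatrix {n : ℕ} (ρ : Matrix (Fin n) (Fin n) ℂ) : Prop :=
  ρ.PosSemidef ∧ ρ.trace = 1

/-- The (real) eigenvalues of a matrix, via its Hermitian spectral decomposition
(junk value `0` if the matrix is not Hermitian). -/
noncomputable def eigs {n : ℕ} (A : Matrix (Fin n) (Fin n) ℂ) : Fin n → ℝ :=
  if h : A.IsHermitian then h.eigenvalues else 0

/-- A linear map on matrices is positive if it preserves positive semidefiniteness. -/
def IsPositiveMap {n : ℕ}
    (Φ : Matrix (Fin n) (Fin n) ℂ →ₗ[ℂ] Matrix (Fin n) (Fin n) ℂ) : Prop :=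
  ∀ A : Matrix (Fin n) (Fin n) ℂ, A.PosSemidef → (Φ A).PosSemidef

/-- A linear map on matrices is trace-preserving if it preserves the trace. -/
def IsTracePreserving {n : ℕ}
    (Φ : Matrix (Fin n) (Fin n) ℂ →ₗ[ℂ] Matrix (Fin n) (Fin n) ℂ) : Prop :=
  ∀ A : Matrix (Fin n) (Fin n) ℂ, (Φ A).trace = A.trace

/-!
Write `ρ = ∑ₖ λₖ uₖuₖ⋆` and let `(wⱼ)` be an eigenbasis of `Φ ρ` with eigenvalues `μⱼ`. Then
`μⱼ = ∑ₖ Bⱼₖ λₖ` with `Bⱼₖ = wⱼ⋆ Φ(uₖuₖ⋆) wⱼ`; positivity makes `B` nonnegative, unitality makes its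
rows and trace preservation its columns sum to one. Since `B` is doubly stochastic, Jensen's
inequality for the convex function `t ↦ tᵖ` gives `∑ μⱼᵖ ≤ ∑ λₖᵖ`.

Conversely, apply the hypothesis to the maximally mixed state `1/n`: the spectrum of `Φ(1/n)` is a
probability vector whose `p`-th power sum is at most `n · n⁻ᵖ`, and by strict convexity the uniform
vector is the only one with that property. Hence `Φ(1/n) = 1/n`, i.e. `Φ 1 = 1`.
-/

open Matrix Finset Unitary

theorem ConvexOn.sum_comp_mulVec_le {ι : Type*} [Fintype ι] [DecidableEq ι] {s : Set ℝ}
    {f : ℝ → ℝ} (hf : ConvexOn ℝ s f) {M : Matrix ι ι ℝ} (hM : M ∈ doublyStochastic ℝ ι)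
    {x : ι → ℝ} (hx : ∀ i, x i ∈ s) :
    ∑ i, f ((M *ᵥ x) i) ≤ ∑ i, f (x i) :=
  calc ∑ i, f ((M *ᵥ x) i) ≤ ∑ i, ∑ j, M i j * f (x j) := sum_le_sum fun i _ =>
        hf.map_sum_le (fun _ _ => nonneg_of_mem_doublyStochastic hM)
          (sum_row_of_mem_doublyStochastic hM i) fun j _ => hx j
    _ = ∑ j, f (x j) := by
        rw [sum_comm]
        simp only [← sum_mul, sum_col_of_mem_doublyStochastic hM, one_mul]

theorem StrictConvexOn.eq_average_of_sum_le {ι : Type*} [Fintype ι] [Nonempty ι] {s : Set ℝ}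
    {f : ℝ → ℝ} (hf : StrictConvexOn ℝ s f) {x : ι → ℝ} (hx : ∀ i, x i ∈ s)
    (h : ∑ i, f (x i) ≤ Fintype.card ι * f ((∑ i, x i) / Fintype.card ι)) (i : ι) :
    x i = (∑ i, x i) / Fintype.card ι := by
  have hcard : (0 : ℝ) < Fintype.card ι := by exact_mod_cast Fintype.card_pos
  set w : ι → ℝ := fun _ => (Fintype.card ι : ℝ)⁻¹
  have hw : ∑ i, w i = 1 := by simp [w, hcard.ne']
  have havg : ∑ i, w i • x i = (∑ i, x i) / Fintype.card ι := by
    simp [w, ← mul_sum, div_eq_inv_mul]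
  have hjensen := hf.convexOn.map_sum_le (t := univ) (fun _ _ => (inv_pos.2 hcard).le) hw
    fun i _ => hx i
  refine havg ▸ (hf.map_sum_eq_iff (fun _ _ => inv_pos.2 hcard) hw fun i _ => hx i).1
    (le_antisymm hjensen ?_) i (mem_univ i)
  rw [havg]
  simpa [w, ← mul_sum, smul_eq_mul, inv_mul_le_iff₀ hcard] using h

section

variable {n : ℕ} {Φ : Matrix (Fin n) (Fin n) ℂ →ₗ[ℂ] Matrix (Fin n) (Fin n) ℂ}

/-- `Φ` read in the orthonormal bases formed by the columns of `U` and `W`; for the eigenbases of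
`ρ` and `Φ ρ`, its `diagTransition` is the matrix `B` above. -/
noncomputable def conjugateMap (U W : unitary (Matrix (Fin n) (Fin n) ℂ))
    (Φ : Matrix (Fin n) (Fin n) ℂ →ₗ[ℂ] Matrix (Fin n) (Fin n) ℂ) :
    Matrix (Fin n) (Fin n) ℂ →ₗ[ℂ] Matrix (Fin n) (Fin n) ℂ :=
  (conjStarAlgAut ℂ _ (star W)).toAlgEquiv.toLinearMap ∘ₗ Φ ∘ₗ
    (conjStarAlgAut ℂ _ U).toAlgEquiv.toLinearMap

theorem conjugateMap_apply (U W : unitary (Matrix (Fin n) (Fin n) ℂ))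
    (X : Matrix (Fin n) (Fin n) ℂ) :
    conjugateMap U W Φ X = conjStarAlgAut ℂ _ (star W) (Φ (conjStarAlgAut ℂ _ U X)) :=
  rfl

theorem IsPositiveMap.conjugateMap (hΦ : IsPositiveMap Φ)
    (U W : unitary (Matrix (Fin n) (Fin n) ℂ)) : IsPositiveMap (conjugateMap U W Φ) :=
  fun X hX => by
    simpa [conjugateMap_apply, star_eq_conjTranspose] using
      (hΦ _ (hX.mul_mul_conjTranspose_same U.1)).conjTranspose_mul_mul_same W.1

theorem IsTracePreserving.conjugateMap (hΦ : IsTracePreserving Φ)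
    (U W : unitary (Matrix (Fin n) (Fin n) ℂ)) : IsTracePreserving (conjugateMap U W Φ) := by
  intro X
  rw [conjugateMap_apply, conjStarAlgAut_star_apply, conjStarAlgAut_apply, trace_mul_cycle,
    mul_star_self_of_mem W.2, one_mul, hΦ, trace_mul_cycle, star_mul_self_of_mem U.2, one_mul]

theorem conjugateMap_map_one (hΦ : Φ 1 = 1) (U W : unitary (Matrix (Fin n) (Fin n) ℂ)) :
    conjugateMap U W Φ 1 = 1 := by
  simp [conjugateMap_apply, hΦ]

noncomputable def diagTransition (Φ : Matrix (Fin n) (Fin n) ℂ →ₗ[ℂ] Matrix (Fin n) (Fin n) ℂ) :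
    Matrix (Fin n) (Fin n) ℝ :=
  Matrix.of fun j k => (Φ (single k k 1) j j).re

theorem diagTransition_mulVec (x : Fin n → ℝ) (j : Fin n) :
    (diagTransition Φ *ᵥ x) j = (Φ (diagonal (RCLike.ofReal ∘ x)) j j).re := by
  have hsum : diagonal (RCLike.ofReal ∘ x) = ∑ k, (x k : ℂ) • single k k (1 : ℂ) := by
    simp [← sum_single_eq_diagonal, smul_single]
  rw [hsum, map_sum, Matrix.sum_apply, Complex.re_sum]
  simp only [map_smul, Matrix.smul_apply, smul_eq_mul, Complex.re_ofReal_mul, diagTransition,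
    mulVec, dotProduct, of_apply, mul_comm]

theorem diagTransition_mem_doublyStochastic (hpos : IsPositiveMap Φ) (htp : IsTracePreserving Φ)
    (hunital : Φ 1 = 1) : diagTransition Φ ∈ doublyStochastic ℝ (Fin n) := by
  refine mem_doublyStochastic_iff_sum.2 ⟨fun j k => ?_, fun j => ?_, fun k => ?_⟩
  · have hsingle : (single k k (1 : ℂ)).PosSemidef := by
      rw [← diagonal_single, posSemidef_diagonal_iff]
      intro i
      by_cases h : i = k <;> simp [h]
    exact (Complex.nonneg_iff.1 (hpos _ hsingle).diag_nonneg).1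
  · have := congrArg (fun A => (A j j).re) hunital
    simpa [diagTransition, ← sum_single_one, Matrix.sum_apply, Complex.re_sum] using this
  · have := congrArg Complex.re (htp (single k k 1))
    simpa [diagTransition, trace, ← Complex.re_sum] using this

theorem eigs_of_isHermitian {A : Matrix (Fin n) (Fin n) ℂ} (hA : A.IsHermitian) :
    eigs A = hA.eigenvalues :=
  dif_pos hA

theorem Matrix.PosSemidef.eigs_nonneg {A : Matrix (Fin n) (Fin n) ℂ} (hA : A.PosSemidef)
    (k : Fin n) : 0 ≤ eigs A k := by
  rw [eigs_of_isHermitian hA.1]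
  exact hA.eigenvalues_nonneg k

theorem IsDensityMatrix.sum_eigs {ρ : Matrix (Fin n) (Fin n) ℂ} (hρ : IsDensityMatrix ρ) :
    ∑ k, eigs ρ k = 1 := by
  have := congrArg Complex.re hρ.2
  simpa [hρ.1.1.trace_eq_sum_eigenvalues, ← eigs_of_isHermitian hρ.1.1] using this

theorem IsDensityMatrix.map (hpos : IsPositiveMap Φ) (htp : IsTracePreserving Φ)
    {ρ : Matrix (Fin n) (Fin n) ℂ} (hρ : IsDensityMatrix ρ) : IsDensityMatrix (Φ ρ) :=
  ⟨hpos ρ hρ.1, (htp ρ).trans hρ.2⟩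

theorem Matrix.IsHermitian.eq_smul_one_iff {A : Matrix (Fin n) (Fin n) ℂ} (hA : A.IsHermitian)
    (c : ℝ) : A = c • 1 ↔ ∀ k, hA.eigenvalues k = c := by
  constructor
  · rintro rfl k
    have : Nonempty (Fin n) := ⟨k⟩
    simpa [← Algebra.algebraMap_eq_smul_one, spectrum.scalar_eq] using
      hA.eigenvalues_mem_spectrum_real k
  · intro h
    have hdiag :
        diagonal (RCLike.ofReal ∘ hA.eigenvalues) = (c • 1 : Matrix (Fin n) (Fin n) ℂ) := by
      ext i j
      by_cases hij : i = j <;> simp [hij, h]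
    rw [hA.spectral_theorem, hdiag]
    simp

theorem Matrix.IsHermitian.eigenvalues_map_eq_diagTransition_mulVec
    {A : Matrix (Fin n) (Fin n) ℂ} (hA : A.IsHermitian) (hΦA : (Φ A).IsHermitian) :
    hΦA.eigenvalues =
      diagTransition (conjugateMap hA.eigenvectorUnitary hΦA.eigenvectorUnitary Φ) *ᵥ
        hA.eigenvalues := by
  funext j
  rw [diagTransition_mulVec, conjugateMap_apply, ← hA.spectral_theorem,
    hΦA.conjStarAlgAut_star_eigenvectorUnitary]
  simp

theorem sum_eigs_rpow_map_le {p : ℝ} (hp : 1 ≤ p) (hpos : IsPositiveMap Φ)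
    (htp : IsTracePreserving Φ) (hunital : Φ 1 = 1) {A : Matrix (Fin n) (Fin n) ℂ}
    (hA : A.PosSemidef) : ∑ k, eigs (Φ A) k ^ p ≤ ∑ k, eigs A k ^ p := by
  have hΦA := (hpos A hA).1
  rw [eigs_of_isHermitian hA.1, eigs_of_isHermitian hΦA,
    hA.1.eigenvalues_map_eq_diagTransition_mulVec hΦA]
  exact (convexOn_rpow hp).sum_comp_mulVec_le
    (diagTransition_mem_doublyStochastic (hpos.conjugateMap _ _) (htp.conjugateMap _ _)
      (conjugateMap_map_one hunital _ _))
    hA.eigenvalues_nonneg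

noncomputable def maximallyMixed (n : ℕ) : Matrix (Fin n) (Fin n) ℂ := (n : ℝ)⁻¹ • 1

theorem isDensityMatrix_maximallyMixed (hn : n ≠ 0) : IsDensityMatrix (maximallyMixed n) := by
  refine ⟨PosSemidef.one.smul (by positivity), ?_⟩
  simp [maximallyMixed, hn]

theorem eigs_maximallyMixed (k : Fin n) : eigs (maximallyMixed n) k = (n : ℝ)⁻¹ := by
  have hH := (isDensityMatrix_maximallyMixed (n := n) (Fin.pos k).ne').1.1
  rw [eigs_of_isHermitian hH]
  exact (hH.eq_smul_one_iff _).1 rfl k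

theorem IsDensityMatrix.eq_maximallyMixed_of_sum_eigs_rpow_le {p : ℝ} (hp : 1 < p)
    {ρ : Matrix (Fin n) (Fin n) ℂ} (hρ : IsDensityMatrix ρ)
    (h : ∑ k, eigs ρ k ^ p ≤ ∑ k, eigs (maximallyMixed n) k ^ p) : ρ = maximallyMixed n := by
  rw [maximallyMixed, hρ.1.1.eq_smul_one_iff]
  intro k
  have : Nonempty (Fin n) := ⟨k⟩
  rw [← eigs_of_isHermitian hρ.1.1]
  have hmin : ∑ k, eigs ρ k ^ p ≤
      Fintype.card (Fin n) * ((∑ k, eigs ρ k) / Fintype.card (Fin n)) ^ p := by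
    simpa [eigs_maximallyMixed, hρ.sum_eigs] using h
  simpa [hρ.sum_eigs] using
    (strictConvexOn_rpow hp).eq_average_of_sum_le (fun k => hρ.1.eigs_nonneg k) hmin k

theorem map_one_of_map_maximallyMixed (hn : n ≠ 0)
    (h : Φ (maximallyMixed n) = maximallyMixed n) : Φ 1 = 1 := by
  rw [maximallyMixed, LinearMap.map_smul_of_tower] at h
  exact smul_right_injective _ (inv_ne_zero (Nat.cast_ne_zero.2 hn)) h

end

/-- For `1 < p`, a positive trace-preserving linear map `Φ` is unital iff
it does not increase the Schatten `p`-norm `(∑ λ_k^p)^(1/p)` on density matrices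
(equivalently, it does not decrease `N_p(ρ) = 1 - (∑ λ_k^p)^(1/p)`). -/
theorem unital_iff_schatten_norm_nonincreasing {n : ℕ} (hn : 1 ≤ n)
    {p : ℝ} (hp : 1 < p)
    (Φ : Matrix (Fin n) (Fin n) ℂ →ₗ[ℂ] Matrix (Fin n) (Fin n) ℂ)
    (hpos : IsPositiveMap Φ) (htp : IsTracePreserving Φ) :
    Φ 1 = 1 ↔
      ∀ ρ : Matrix (Fin n) (Fin n) ℂ, IsDensityMatrix ρ →
        (∑ k, eigs (Φ ρ) k ^ p) ^ (1 / p) ≤ (∑ k, eigs ρ k ^ p) ^ (1 / p) := by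
  have hsum_nonneg {A : Matrix (Fin n) (Fin n) ℂ} (hA : A.PosSemidef) :
      0 ≤ ∑ k, eigs A k ^ p :=
    sum_nonneg fun k _ => Real.rpow_nonneg (hA.eigs_nonneg k) p
  have hroot_le_iff {ρ : Matrix (Fin n) (Fin n) ℂ} (hρ : IsDensityMatrix ρ) :
      (∑ k, eigs (Φ ρ) k ^ p) ^ (1 / p) ≤ (∑ k, eigs ρ k ^ p) ^ (1 / p) ↔
        ∑ k, eigs (Φ ρ) k ^ p ≤ ∑ k, eigs ρ k ^ p :=
    Real.rpow_le_rpow_iff (hsum_nonneg (hpos ρ hρ.1)) (hsum_nonneg hρ.1) (by positivity)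
  refine ⟨fun hunital ρ hρ => (hroot_le_iff hρ).2 ?_, fun hmono => ?_⟩
  · exact sum_eigs_rpow_map_le hp.le hpos htp hunital hρ.1
  · have hn0 : n ≠ 0 := Nat.one_le_iff_ne_zero.1 hn
    have hmixed := isDensityMatrix_maximallyMixed hn0
    refine map_one_of_map_maximallyMixed hn0 <|
      (hmixed.map hpos htp).eq_maximallyMixed_of_sum_eigs_rpow_le hp ?_
    exact (hroot_le_iff hmixed).1 (hmono _ hmixed)
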